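/- arXiv:2403.05445 — 9 statements merged into one kernel-verified Lean document; each statement's English description precedes it below -/
import Mathlib

section
/- Let 𝔽 be a finite field with q = |𝔽| > 2 elements and let k ≥ 2 be an integer. Let α = (α_1,…,α_{2k}) ∈ 𝔽^{2k} be nonzero with α_i = 0 for some index i, and let f = α_1 x_1x_2 + α_2 x_2x_3 + ⋯ + α_{2k-1} x_{2k-1}x_{2k} + α_{2k} x_{2k}x_1 ∈ 𝔽[x_1,…,x_{2k}]. Then the number of a ∈ (𝔽*)^{2k} with f(a) = 0 is at most (q-1)^{2k-1}. -/
/-!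
Walking around the cycle from a vanishing coefficient, one finds `p` with `α p = 0` and
`α (p + 1) ≠ 0`. The variable `x_{p+1}` then occurs only in the term `α_{p+1} x_{p+1} x_{p+2}`,
so on `(𝔽*)^n` the form is affine in `x_{p+1}` with nonzero slope: a zero is determined by its
other `n - 1` coordinates.
-/

/-- Cyclic successor on `Fin n`. -/
def cSucc {n : ℕ} (i : Fin n) : Fin n := ⟨(i.1 + 1) % n, Nat.mod_lt _ i.pos⟩

/-- The cycle form `f_α(a) = Σ_{i} α_i a_i a_{i+1}` (indices mod `n`). -/
def cycSum {𝔽 : Type*} [Field 𝔽] {n : ℕ} (α : Fin n → 𝔽) (a : Fin n → 𝔽ˣ) : 𝔽 :=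
  ∑ i, α i * (a i : 𝔽) * (a (cSucc i) : 𝔽)

/-- The number of points of `(𝔽*)^n` at which `f` vanishes. -/
noncomputable def zCount {𝔽 : Type*} [Field 𝔽] {n : ℕ} (f : (Fin n → 𝔽ˣ) → 𝔽) : ℕ :=
  Nat.card {a : Fin n → 𝔽ˣ // f a = 0}

theorem cSucc_eq_add_one {n : ℕ} [NeZero n] (t : Fin n) : cSucc t = t + 1 := by
  apply Fin.ext
  simp only [cSucc, Fin.add_def, Fin.val_one']
  rw [Nat.add_mod, Nat.mod_eq_of_lt t.2]

theorem cSucc_injective {n : ℕ} : Function.Injective (cSucc (n := n)) := by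
  rcases n.eq_zero_or_pos with rfl | hn
  · exact fun t => t.elim0
  · have : NeZero n := ⟨hn.ne'⟩
    intro a b h
    rw [cSucc_eq_add_one, cSucc_eq_add_one] at h
    exact add_right_cancel h

open Fin.NatCast in
theorem exists_eq_zero_and_cSucc_ne_zero {M : Type*} [Zero M] {n : ℕ} {α : Fin n → M}
    (hα : α ≠ 0) (i : Fin n) (hi : α i = 0) : ∃ p, α p = 0 ∧ α (cSucc p) ≠ 0 := by
  have : NeZero n := ⟨i.pos.ne'⟩
  by_contra! h
  have hzero : ∀ m : ℕ, α (i + m) = 0 := by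
    intro m
    induction m with
    | zero => simpa using hi
    | succ m ih => rw [Nat.cast_succ, ← add_assoc, ← cSucc_eq_add_one]; exact h _ ih
  exact hα (funext fun t => by simpa [Fin.cast_val_eq_self] using hzero (t - i).val)

theorem cSucc_ne_self_of_ne {n : ℕ} {p : Fin n} (hp : cSucc p ≠ p) (j : Fin n) :
    cSucc j ≠ j := by
  have : NeZero n := ⟨j.pos.ne'⟩
  intro hj
  have hn : n = 1 := by
    rw [← Fin.one_eq_zero_iff, ← add_eq_left (a := j), ← cSucc_eq_add_one, hj]
  subst hn
  exact hp (Subsingleton.elim _ _)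

theorem Nat.card_subtype_le_pow_of_eq_of_forall_ne {ι M : Type*} [Fintype ι] [Finite M]
    (P : (ι → M) → Prop) (j : ι)
    (hP : ∀ a b, P a → P b → (∀ t ≠ j, a t = b t) → a = b) :
    Nat.card {a // P a} ≤ Nat.card M ^ (Fintype.card ι - 1) := by
  have hinj : Function.Injective fun (a : {a // P a}) (t : {t // t ≠ j}) => a.1 t :=
    fun a b hab => Subtype.ext (hP a b a.2 b.2 fun t ht => congrFun hab ⟨t, ht⟩)
  classical
  calc Nat.card {a // P a} ≤ Nat.card ({t // t ≠ j} → M) := Nat.card_le_card_of_injective _ hinj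
    _ = _ := by
      rw [Nat.card_fun, Nat.card_eq_fintype_card (α := {t // t ≠ j}),
        Fintype.card_subtype_compl, Fintype.card_subtype_eq]

theorem cycSum_update {𝔽 : Type*} [Field 𝔽] {n : ℕ} {α : Fin n → 𝔽} {p j : Fin n}
    (hp : α p = 0) (hpj : cSucc p = j) (hj : cSucc j ≠ j) (a : Fin n → 𝔽ˣ) (u : 𝔽ˣ) :
    cycSum α (Function.update a j u) = cycSum α a + α j * (u - a j) * a (cSucc j) := by
  classical
  rw [← sub_eq_iff_eq_add', cycSum, cycSum, ← Finset.sum_sub_distrib,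
    Finset.sum_eq_single j]
  · simp only [Function.update_self, Function.update_of_ne hj]
    ring
  · intro t _ htj
    rcases eq_or_ne t p with rfl | htp
    · simp [hp]
    · have hst : cSucc t ≠ j := fun h => htp (cSucc_injective (h.trans hpj.symm))
      simp only [Function.update_of_ne htj, Function.update_of_ne hst, sub_self]
  · simp

theorem eq_of_cycSum_eq_zero_of_forall_ne {𝔽 : Type*} [Field 𝔽] {n : ℕ} {α : Fin n → 𝔽}
    {p : Fin n} (hp : α p = 0) (hsp : α (cSucc p) ≠ 0) (a b : Fin n → 𝔽ˣ)
    (ha : cycSum α a = 0) (hb : cycSum α b = 0) (hab : ∀ t ≠ cSucc p, a t = b t) : a = b := by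
  classical
  have hupd : b = Function.update a (cSucc p) (b (cSucc p)) := by
    funext t
    rcases eq_or_ne t (cSucc p) with rfl | ht
    · simp
    · simp [Function.update_of_ne ht, hab t ht]
  have hj := cSucc_ne_self_of_ne (fun h => hsp (h ▸ hp)) (cSucc p)
  have key := cycSum_update hp rfl hj a (b (cSucc p))
  rw [← hupd, ha, hb, zero_add, eq_comm] at key
  have : (b (cSucc p) : 𝔽) = a (cSucc p) := by
    simpa [hsp, sub_eq_zero] using key
  rw [hupd, Units.ext this, Function.update_eq_self]

theorem zCount_cycSum_le {𝔽 : Type*} [Field 𝔽] [Fintype 𝔽] {n : ℕ} {α : Fin n → 𝔽}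
    (hα : α ≠ 0) (i : Fin n) (hi : α i = 0) :
    zCount (cycSum α) ≤ (Fintype.card 𝔽 - 1) ^ (n - 1) := by
  classical
  obtain ⟨p, hp, hsp⟩ := exists_eq_zero_and_cSucc_ne_zero hα i hi
  have := Nat.card_subtype_le_pow_of_eq_of_forall_ne (fun a => cycSum α a = 0) (cSucc p)
    fun a b => eq_of_cycSum_eq_zero_of_forall_ne hp hsp a b
  rwa [Nat.card_eq_fintype_card (α := 𝔽ˣ), Fintype.card_units, Fintype.card_fin] at this

theorem stmt2_general {𝔽 : Type*} [Field 𝔽] [Fintype 𝔽] (q k : ℕ)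
    (hq : q = Fintype.card 𝔽)
    (α : Fin (2*k) → 𝔽) (hα : α ≠ 0) (i : Fin (2*k)) (hi : α i = 0) :
    zCount (cycSum α) ≤ (q - 1) ^ (2*k - 1) :=
  hq ▸ zCount_cycSum_le hα i hi

theorem stmt2 {𝔽 : Type*} [Field 𝔽] [Fintype 𝔽] (q k : ℕ)
    (hq : q = Fintype.card 𝔽) (hq2 : 2 < q) (hk : 2 ≤ k)
    (α : Fin (2*k) → 𝔽) (hα : α ≠ 0) (i : Fin (2*k)) (hi : α i = 0) :
    zCount (cycSum α) ≤ (q - 1) ^ (2*k - 1) :=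
  stmt2_general q k hq α hα i hi
end

section
/- Let 𝔽 be a finite field with q = |𝔽| > 2 elements, let k ≥ 2 be an integer, and let 2 ≤ r ≤ 2k. Let g = Σ_{i=1}^{r-1} β_i x_i x_{i+1} ∈ 𝔽[x_1,…,x_{2k}] with all coefficients β_1,…,β_{r-1} ∈ 𝔽 nonzero. Then the number of a ∈ (𝔽*)^{2k} with g(a) = 0 equals q^{-1}·[(q-1)^r + (-1)^{r-1}(q-1)^2]·(q-1)^{2k-r}. -/
/-!
Write `N n` for the number of zeros in the torus `(𝔽ˣ)^(n+1)` of a path form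
`∑_{i<n} c_i x_i x_{i+1}` with nonzero coefficients. Solving for the first variable shows
that the zeros of the form correspond to the points where the form in the remaining
variables does not vanish, so `N (n+1) + N n = (q-1)^(n+1)`, and with `N 0 = q - 1` this gives
`q N n = (q-1)^(n+1) + (-1)^n (q-1)^2`. The variables `x_{r+1}, …, x_{2k}` not occurring in
`g` are free and contribute the factor `(q-1)^(2k-r)`.
-/

section PathForm

variable {𝔽 : Type*} [Field 𝔽]

def pathForm {n : ℕ} (c : Fin n → 𝔽) (a : Fin (n + 1) → 𝔽ˣ) : 𝔽 :=
  ∑ i : Fin n, c i * a i.castSucc * a i.succ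

lemma pathForm_cons {n : ℕ} (c : Fin (n + 1) → 𝔽) (u : 𝔽ˣ) (a : Fin (n + 1) → 𝔽ˣ) :
    pathForm c (Fin.cons u a) = c 0 * u * a 0 + pathForm (Fin.tail c) a := by
  simp [pathForm, Fin.sum_univ_succ, Fin.tail]

lemma card_pathForm_succ_eq_zero {n : ℕ} (c : Fin (n + 1) → 𝔽) (hc : c 0 ≠ 0) :
    Nat.card {a : Fin (n + 2) → 𝔽ˣ // pathForm c a = 0} =
      Nat.card {a : Fin (n + 1) → 𝔽ˣ // pathForm (Fin.tail c) a ≠ 0} := by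
  refine Nat.card_eq_of_bijective
    (fun a => ⟨Fin.tail a.1, fun h0 => ?_⟩) ⟨fun a b hab => ?_, fun b => ?_⟩
  · have h := a.2
    rw [← Fin.cons_self_tail a.1, pathForm_cons, h0, add_zero] at h
    simp [hc] at h
  · have htail : Fin.tail a.1 = Fin.tail b.1 := congrArg Subtype.val hab
    have ha := a.2
    have hb := b.2
    rw [← Fin.cons_self_tail a.1, pathForm_cons] at ha
    rw [← Fin.cons_self_tail b.1, pathForm_cons, ← htail] at hb
    have hhead : a.1 0 = b.1 0 := Units.ext <| mul_left_cancel₀ hc <|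
      mul_right_cancel₀ (Fin.tail a.1 0).ne_zero <| add_right_cancel (ha.trans hb.symm)
    exact Subtype.ext <| by rw [← Fin.cons_self_tail a.1, ← Fin.cons_self_tail b.1, hhead, htail]
  · have hb0 : c 0 * b.1 0 ≠ 0 := mul_ne_zero hc (b.1 0).ne_zero
    let u : 𝔽ˣ := Units.mk0 (-pathForm (Fin.tail c) b.1 / (c 0 * b.1 0))
      (div_ne_zero (neg_ne_zero.2 b.2) hb0)
    refine ⟨⟨Fin.cons u b.1, ?_⟩, rfl⟩
    rw [pathForm_cons, Units.val_mk0]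
    field_simp
    ring

variable [Finite 𝔽]

lemma card_pathForm_succ_eq_zero_add {n : ℕ} (c : Fin (n + 1) → 𝔽) (hc : c 0 ≠ 0) :
    Nat.card {a : Fin (n + 2) → 𝔽ˣ // pathForm c a = 0} +
      Nat.card {a : Fin (n + 1) → 𝔽ˣ // pathForm (Fin.tail c) a = 0} =
        Nat.card 𝔽ˣ ^ (n + 1) := by
  classical
  rw [card_pathForm_succ_eq_zero c hc, add_comm, ← Nat.card_sum,
    Nat.card_congr (Equiv.sumCompl _), Nat.card_fun, Nat.card_fin]

theorem card_mul_card_pathForm_eq_zero {n : ℕ} (c : Fin n → 𝔽) (hc : ∀ i, c i ≠ 0) :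
    (Nat.card 𝔽 : ℤ) * Nat.card {a : Fin (n + 1) → 𝔽ˣ // pathForm c a = 0} =
      ((Nat.card 𝔽 : ℤ) - 1) ^ (n + 1) + (-1) ^ n * ((Nat.card 𝔽 : ℤ) - 1) ^ 2 := by
  have hunits : (Nat.card 𝔽ˣ : ℤ) = Nat.card 𝔽 - 1 := by
    rw [Nat.card_eq_card_units_add_one 𝔽]; push_cast; ring
  induction n with
  | zero =>
    have hall : ∀ a : Fin 1 → 𝔽ˣ, pathForm c a = 0 := fun a => by simp [pathForm]
    rw [Nat.card_congr (Equiv.subtypeUnivEquiv hall), Nat.card_fun, Nat.card_fin]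
    push_cast
    rw [hunits]
    ring
  | succ n ih =>
    have hrec := card_pathForm_succ_eq_zero_add c (hc 0)
    have ih := ih (Fin.tail c) fun i => hc i.succ
    zify at hrec
    rw [hunits] at hrec
    linear_combination (Nat.card 𝔽 : ℤ) * hrec - ih

end PathForm

lemma card_subtype_comp_castLE {α : Type*} {r N : ℕ} (h : r ≤ N) (P : (Fin r → α) → Prop) :
    Nat.card {a : Fin N → α // P fun i => a (Fin.castLE h i)} =
      Nat.card {b // P b} * Nat.card α ^ (N - r) := by
  obtain ⟨m, rfl⟩ := Nat.exists_eq_add_of_le h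
  conv_rhs => rw [Nat.add_sub_cancel_left]
  calc _ = Nat.card {x : (Fin r → α) × (Fin m → α) // P x.1} :=
        Nat.card_congr <| (Fin.appendEquiv r m).symm.subtypeEquiv fun _ => Iff.rfl
    _ = _ := by
      rw [Nat.card_congr Equiv.prodSubtypeFstEquivSubtypeProd, Nat.card_prod, Nat.card_fun,
        Nat.card_fin]

theorem stmt4 {𝔽 : Type*} [Field 𝔽] [Fintype 𝔽] (q k r : ℕ)
    (hq : q = Fintype.card 𝔽) (hr2 : 2 ≤ r) (hr : r ≤ 2*k)
    (β : Fin (r - 1) → 𝔽) (hβ : ∀ i, β i ≠ 0) :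
    (Nat.card {a : Fin (2*k) → 𝔽ˣ //
        ∑ i : Fin (r - 1), β i * (a ⟨i.1, by have := i.isLt; omega⟩ : 𝔽) *
          (a ⟨i.1 + 1, by have := i.isLt; omega⟩ : 𝔽) = 0} : ℚ)
      = (((q : ℚ) - 1) ^ r + (-1 : ℚ) ^ (r - 1) * ((q : ℚ) - 1) ^ 2) * ((q : ℚ) - 1) ^ (2*k - r) /
        (q : ℚ) := by
  obtain ⟨n, rfl⟩ : ∃ n, r = n + 1 := ⟨r - 1, by omega⟩
  have hcard : (Nat.card 𝔽 : ℚ) = q := by rw [hq, Nat.card_eq_fintype_card]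
  have hunits : (Nat.card 𝔽ˣ : ℚ) = q - 1 := by
    rw [← hcard, Nat.card_eq_card_units_add_one 𝔽]; push_cast; ring
  have hpath : (q : ℚ) * Nat.card {a // pathForm β a = 0} =
      ((q : ℚ) - 1) ^ (n + 1) + (-1) ^ n * ((q : ℚ) - 1) ^ 2 := by
    rw [← hcard]; exact_mod_cast card_mul_card_pathForm_eq_zero β hβ
  calc _ = ((Nat.card {b // pathForm β b = 0} * Nat.card 𝔽ˣ ^ (2 * k - (n + 1)) : ℕ) : ℚ) :=
        congrArg Nat.cast (card_subtype_comp_castLE hr fun b => pathForm β b = 0)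
    _ = _ := by
      rw [eq_div_iff (by rw [← hcard]; exact_mod_cast Nat.card_pos.ne'),
        show (-1 : ℚ) ^ (n + 1 - 1) = (-1) ^ n from rfl, ← hpath]
      push_cast
      rw [hunits]
      ring
end

section
/- Let 𝔽 be a finite field with q = |𝔽| > 2 elements and let α_1, α_2, α_3, α_4 ∈ 𝔽 all be nonzero. Let f = α_1 x_1x_2 + α_2 x_2x_3 + α_3 x_3x_4 + α_4 x_4x_1 ∈ 𝔽[x_1,x_2,x_3,x_4]. Then the number of a ∈ (𝔽*)^4 with f(a) = 0 is at most (q-1)^2(2q-3), with equality if and only if α_1 α_3 = α_2 α_4. -/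
/-!
Write `n = q - 1` and `f = (α₁x₁ + α₂x₃)x₂ + (α₄x₁ + α₃x₃)x₄`. For fixed units `x₁, x₃` this is a
linear form `A x₂ + B x₄`, with `n²` unit zeros if `A = B = 0`, none if exactly one of `A, B`
vanishes, and `n` otherwise. For fixed `x₁`, each of `A` and `B` vanishes at exactly one unit `x₃`,
and these two points coincide iff `α₁α₃ = α₂α₄`. Summing, the count is `n (n² + (n - 1) n) =
n² (2n - 1)` in that case and `n² (n - 2)` otherwise.
-/

open Finset

theorem Fintype.sum_ite_eq_ite_eq {ι : Type*} [Fintype ι] [DecidableEq ι] (i j : ι) (a c : ℕ) :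
    ∑ v, (if v = i then (if v = j then a else 0) else if v = j then 0 else c) =
      if i = j then a + (Fintype.card ι - 1) * c else (Fintype.card ι - 2) * c := by
  rw [← add_sum_erase _ _ (mem_univ i)]
  by_cases hij : i = j
  · subst hij
    rw [Finset.sum_congr rfl fun v hv => by
      rw [if_neg (ne_of_mem_erase hv), if_neg (ne_of_mem_erase hv)]]
    simp [card_erase_of_mem]
  · have hj : j ∈ univ.erase i := mem_erase.2 ⟨Ne.symm hij, mem_univ j⟩
    rw [← add_sum_erase _ _ hj, Finset.sum_congr rfl fun v hv => by
      rw [if_neg (mem_erase.1 (mem_erase.1 hv).2).1, if_neg (mem_erase.1 hv).1]]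
    simp [hij, Ne.symm hij, card_erase_of_mem hj, card_erase_of_mem, Nat.sub_sub]

section UnitZeros

variable {𝔽 : Type*} [Field 𝔽]

theorem exists_unit_forall_linear_eq_zero_iff_eq {a b : 𝔽} (ha : a ≠ 0) (hb : b ≠ 0) (u : 𝔽ˣ) :
    ∃ v₀ : 𝔽ˣ, ∀ v : 𝔽ˣ, a * u + b * v = 0 ↔ v = v₀ := by
  refine ⟨Units.mk0 (-(a * u) / b) (by simp [ha, hb]), fun v => ?_⟩
  rw [Units.ext_iff, Units.val_mk0, eq_div_iff hb]
  constructor <;> intro h <;> linear_combination h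

theorem exists_unit_common_zero_iff {a b : 𝔽} (c d : 𝔽) (ha : a ≠ 0) (hb : b ≠ 0) (u : 𝔽ˣ) :
    (∃ v : 𝔽ˣ, a * u + b * v = 0 ∧ c * u + d * v = 0) ↔ a * d = b * c := by
  constructor
  · rintro ⟨v, h₁, h₂⟩
    apply mul_right_cancel₀ u.ne_zero
    linear_combination d * h₁ - b * h₂
  · intro h
    refine ⟨Units.mk0 (-(a * u) / b) (by simp [ha, hb]), ?_, ?_⟩
    · simp only [Units.val_mk0]
      field_simp
      ring
    · simp only [Units.val_mk0]
      field_simp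
      linear_combination (-(u : 𝔽)) * h

variable [Fintype 𝔽]

theorem card_units_linear_eq_zero [DecidableEq 𝔽] (a b : 𝔽) :
    Nat.card {w : 𝔽ˣ × 𝔽ˣ // a * w.1 + b * w.2 = 0} =
      if a = 0 then (if b = 0 then Fintype.card 𝔽ˣ ^ 2 else 0)
      else if b = 0 then 0 else Fintype.card 𝔽ˣ := by
  split_ifs with ha hb hb
  · simp [ha, hb, Nat.card_eq_fintype_card, sq]
  · simp [ha, hb]
  · simp [hb, ha]
  · rw [Nat.card_congr (Equiv.subtypeProdEquivSigmaSubtype fun u v : 𝔽ˣ => a * u + b * v = 0),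
      Nat.card_sigma]
    have hfiber (u : 𝔽ˣ) : Nat.card {v : 𝔽ˣ // a * u + b * v = 0} = 1 := by
      obtain ⟨v₀, hv₀⟩ := exists_unit_forall_linear_eq_zero_iff_eq ha hb u
      simp [hv₀]
    rw [sum_congr rfl fun u _ => hfiber u, sum_const, card_univ, smul_eq_mul, mul_one]

end UnitZeros

section CyclicForm

variable {𝔽 : Type*} [Field 𝔽] [Fintype 𝔽] [DecidableEq 𝔽] {α₁ α₂ α₃ α₄ : 𝔽}

theorem sum_card_units_linear_eq_zero (h1 : α₁ ≠ 0) (h2 : α₂ ≠ 0) (h3 : α₃ ≠ 0) (h4 : α₄ ≠ 0)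
    (u : 𝔽ˣ) :
    ∑ v : 𝔽ˣ, Nat.card {w : 𝔽ˣ × 𝔽ˣ //
        (α₁ * u + α₂ * v) * w.1 + (α₄ * u + α₃ * v) * w.2 = 0} =
      if α₁ * α₃ = α₂ * α₄ then Fintype.card 𝔽ˣ ^ 2 + (Fintype.card 𝔽ˣ - 1) * Fintype.card 𝔽ˣ
      else (Fintype.card 𝔽ˣ - 2) * Fintype.card 𝔽ˣ := by
  obtain ⟨v₀, hv₀⟩ := exists_unit_forall_linear_eq_zero_iff_eq h1 h2 u
  obtain ⟨v₁, hv₁⟩ := exists_unit_forall_linear_eq_zero_iff_eq h4 h3 u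
  have hmeet : v₀ = v₁ ↔ α₁ * α₃ = α₂ * α₄ := by
    rw [← exists_unit_common_zero_iff α₄ α₃ h1 h2 u]
    simp [hv₀, hv₁]
  simp only [card_units_linear_eq_zero, hv₀, hv₁]
  rw [Fintype.sum_ite_eq_ite_eq, Fintype.card_units]
  simp only [hmeet]

def cyclicZerosEquiv (α₁ α₂ α₃ α₄ : 𝔽) :
    {a : Fin 4 → 𝔽ˣ //
        α₁ * (a 0 : 𝔽) * (a 1 : 𝔽) + α₂ * (a 1 : 𝔽) * (a 2 : 𝔽) +
          α₃ * (a 2 : 𝔽) * (a 3 : 𝔽) + α₄ * (a 3 : 𝔽) * (a 0 : 𝔽) = 0} ≃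
      Σ p : 𝔽ˣ × 𝔽ˣ, {w : 𝔽ˣ × 𝔽ˣ //
        (α₁ * p.1 + α₂ * p.2) * w.1 + (α₄ * p.1 + α₃ * p.2) * w.2 = 0} where
  toFun a := ⟨(a.1 0, a.1 2), (a.1 1, a.1 3), by linear_combination a.2⟩
  invFun x := ⟨![x.1.1, x.2.1.1, x.1.2, x.2.1.2], by
    simp only [Matrix.cons_val_zero, Matrix.cons_val_one, Matrix.cons_val_two,
      Matrix.cons_val_three, Matrix.head_cons, Matrix.tail_cons]
    linear_combination x.2.2⟩
  left_inv a := Subtype.ext (by funext i; fin_cases i <;> rfl)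
  right_inv _ := rfl

theorem card_cyclic_zeros (h1 : α₁ ≠ 0) (h2 : α₂ ≠ 0) (h3 : α₃ ≠ 0) (h4 : α₄ ≠ 0) :
    Nat.card {a : Fin 4 → 𝔽ˣ //
        α₁ * (a 0 : 𝔽) * (a 1 : 𝔽) + α₂ * (a 1 : 𝔽) * (a 2 : 𝔽) +
          α₃ * (a 2 : 𝔽) * (a 3 : 𝔽) + α₄ * (a 3 : 𝔽) * (a 0 : 𝔽) = 0} =
      Fintype.card 𝔽ˣ *
        if α₁ * α₃ = α₂ * α₄ then Fintype.card 𝔽ˣ ^ 2 + (Fintype.card 𝔽ˣ - 1) * Fintype.card 𝔽ˣ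
        else (Fintype.card 𝔽ˣ - 2) * Fintype.card 𝔽ˣ := by
  rw [Nat.card_congr (cyclicZerosEquiv α₁ α₂ α₃ α₄), Nat.card_sigma, Fintype.sum_prod_type]
  simp only [sum_card_units_linear_eq_zero h1 h2 h3 h4, sum_const, card_univ, smul_eq_mul]

end CyclicForm

theorem stmt6_general {𝔽 : Type*} [Field 𝔽] [Fintype 𝔽] (q : ℕ)
    (hq : q = Fintype.card 𝔽)
    (α₁ α₂ α₃ α₄ : 𝔽) (h1 : α₁ ≠ 0) (h2 : α₂ ≠ 0) (h3 : α₃ ≠ 0) (h4 : α₄ ≠ 0) :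
    Nat.card {a : Fin 4 → 𝔽ˣ //
        α₁ * (a 0 : 𝔽) * (a 1 : 𝔽) + α₂ * (a 1 : 𝔽) * (a 2 : 𝔽) +
          α₃ * (a 2 : 𝔽) * (a 3 : 𝔽) + α₄ * (a 3 : 𝔽) * (a 0 : 𝔽) = 0}
      ≤ (q - 1) ^ 2 * (2 * q - 3) ∧
    (Nat.card {a : Fin 4 → 𝔽ˣ //
        α₁ * (a 0 : 𝔽) * (a 1 : 𝔽) + α₂ * (a 1 : 𝔽) * (a 2 : 𝔽) +
          α₃ * (a 2 : 𝔽) * (a 3 : 𝔽) + α₄ * (a 3 : 𝔽) * (a 0 : 𝔽) = 0}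
        = (q - 1) ^ 2 * (2 * q - 3) ↔ α₁ * α₃ = α₂ * α₄) := by
  classical
  rw [card_cyclic_zeros h1 h2 h3 h4]
  obtain ⟨n, hn⟩ : ∃ n, Fintype.card 𝔽ˣ = n + 1 :=
    Nat.exists_eq_add_one_of_ne_zero Fintype.card_ne_zero
  have hq1 : q - 1 = n + 1 := by rw [hq, ← Fintype.card_units, hn]
  have hq3 : 2 * q - 3 = 2 * n + 1 := by omega
  rw [hn, hq1, hq3]
  split_ifs with hdet
  · have hmax : (n + 1) * ((n + 1) ^ 2 + (n + 1 - 1) * (n + 1)) = (n + 1) ^ 2 * (2 * n + 1) := by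
      rw [Nat.add_sub_cancel]
      ring
    exact ⟨hmax.le, iff_of_true hmax hdet⟩
  · have hlt : (n + 1) * ((n + 1 - 2) * (n + 1)) < (n + 1) ^ 2 * (2 * n + 1) := by
      rw [mul_comm (n + 1 - 2), ← mul_assoc, ← sq]
      exact Nat.mul_lt_mul_of_pos_left (by omega) (by positivity)
    exact ⟨hlt.le, iff_of_false hlt.ne hdet⟩

theorem stmt6 {𝔽 : Type*} [Field 𝔽] [Fintype 𝔽] (q : ℕ)
    (hq : q = Fintype.card 𝔽) (hq2 : 2 < q)
    (α₁ α₂ α₃ α₄ : 𝔽) (h1 : α₁ ≠ 0) (h2 : α₂ ≠ 0) (h3 : α₃ ≠ 0) (h4 : α₄ ≠ 0) :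
    Nat.card {a : Fin 4 → 𝔽ˣ //
        α₁ * (a 0 : 𝔽) * (a 1 : 𝔽) + α₂ * (a 1 : 𝔽) * (a 2 : 𝔽) +
          α₃ * (a 2 : 𝔽) * (a 3 : 𝔽) + α₄ * (a 3 : 𝔽) * (a 0 : 𝔽) = 0}
      ≤ (q - 1) ^ 2 * (2 * q - 3) ∧
    (Nat.card {a : Fin 4 → 𝔽ˣ //
        α₁ * (a 0 : 𝔽) * (a 1 : 𝔽) + α₂ * (a 1 : 𝔽) * (a 2 : 𝔽) +
          α₃ * (a 2 : 𝔽) * (a 3 : 𝔽) + α₄ * (a 3 : 𝔽) * (a 0 : 𝔽) = 0}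
        = (q - 1) ^ 2 * (2 * q - 3) ↔ α₁ * α₃ = α₂ * α₄) :=
  stmt6_general q hq α₁ α₂ α₃ α₄ h1 h2 h3 h4
end

section
/- Let 𝔽 be a finite field with q = |𝔽| > 2 elements and let k ≥ 2 be an integer. The projective toric subset X ⊆ ℙ^{2k-1}(𝔽) parameterized by the even cycle C_{2k} has cardinality |X| = (q-1)^{2k-2}. -/
/-- The vector of products of consecutive coordinates along the cycle:
`(x₁x₂, x₂x₃, …, x_{n-1}x_n, x_nx₁)`. -/
def cycVec {𝔽 : Type*} [Field 𝔽] {n : ℕ} (x : Fin n → 𝔽ˣ) : Fin n → 𝔽 :=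
  fun i => (x i : 𝔽) * (x (cSucc i) : 𝔽)

lemma cycVec_ne_zero {𝔽 : Type*} [Field 𝔽] {n : ℕ} (hn : 0 < n) (x : Fin n → 𝔽ˣ) :
    cycVec x ≠ 0 := by
  intro h
  have h0 := congrFun h ⟨0, hn⟩
  simp only [cycVec, Pi.zero_apply] at h0
  exact mul_ne_zero (Units.ne_zero _) (Units.ne_zero _) h0

/-- The projective toric subset of `ℙ^{2k-1}` parameterized by the even cycle of length `2k`. -/
def cycX (𝔽 : Type*) [Field 𝔽] (k : ℕ) (hk : 0 < k) :
    Set (Projectivization 𝔽 (Fin (2*k) → 𝔽)) :=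
  {P | ∃ x : Fin (2*k) → 𝔽ˣ,
    P = Projectivization.mk 𝔽 (cycVec x) (cycVec_ne_zero (by omega) x)}

/-!
Rescaling the cycle variables by the alternating vector `(a, b, a, b, …)` multiplies every
edge monomial `xᵢxᵢ₊₁` by `ab`, because the cycle is even; so every point of `X` has a
parameter with `x₀ = x₁ = 1`. Such a parameter is unique: the point fixes the scalar through
the first coordinate `x₀x₁ = 1`, and then each `xᵢ₊₁` is read off from `xᵢxᵢ₊₁` and `xᵢ`.
The remaining `2k - 2` coordinates are free units, whence `(q - 1)^(2k-2)` points.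
-/

open Projectivization

section Cycle

variable {n : ℕ}

lemma cSucc_mk {i : ℕ} (hi : i + 1 < n) : cSucc (⟨i, by omega⟩ : Fin n) = ⟨i + 1, hi⟩ := by
  simp [cSucc, Nat.mod_eq_of_lt hi]

lemma cSucc_val_mod_two (hn : Even n) (i : Fin n) : (cSucc i).1 % 2 = (i.1 + 1) % 2 :=
  Nat.mod_mod_of_dvd _ (even_iff_two_dvd.mp hn)

def alternating {M : Type*} (a b : M) : Fin n → M := fun i => if i.1 % 2 = 0 then a else b

def padOnes {M : Type*} [One M] (u : Fin (n - 2) → M) : Fin n → M :=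
  fun i => if h : i.1 < 2 then 1 else u ⟨i.1 - 2, by omega⟩

@[simp]
lemma padOnes_zero {M : Type*} [One M] (hn : 0 < n) (u : Fin (n - 2) → M) :
    padOnes u ⟨0, hn⟩ = 1 := by
  simp [padOnes]

@[simp]
lemma padOnes_one {M : Type*} [One M] (hn : 1 < n) (u : Fin (n - 2) → M) :
    padOnes u ⟨1, hn⟩ = 1 := by
  simp [padOnes]

lemma padOnes_drop_two {M : Type*} [One M] {x : Fin n → M} (hn : 1 < n)
    (h0 : x ⟨0, by omega⟩ = 1) (h1 : x ⟨1, hn⟩ = 1) :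
    padOnes (fun i : Fin (n - 2) => x ⟨i.1 + 2, by omega⟩) = x := by
  funext i
  by_cases hi : i.1 < 2
  · obtain h | h : i = ⟨0, by omega⟩ ∨ i = ⟨1, hn⟩ := by simp only [Fin.ext_iff]; omega
    · simp [h, padOnes, h0]
    · simp [h, padOnes, h1]
  · simp only [padOnes, hi, dite_false]
    exact congrArg x (Fin.ext (Nat.sub_add_cancel (by omega)))

lemma padOnes_injective {M : Type*} [One M] : Function.Injective (padOnes (n := n) (M := M)) := by
  intro u v h
  funext i
  simpa [padOnes] using congrFun h ⟨i.1 + 2, by omega⟩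

end Cycle

section Torus

variable {𝔽 : Type*} [Field 𝔽] {n : ℕ}

lemma cycVec_alternating_mul (hn : Even n) (a b : 𝔽ˣ) (x : Fin n → 𝔽ˣ) :
    cycVec (alternating a b * x) = (a * b) • cycVec x := by
  funext i
  have hpar := cSucc_val_mod_two hn i
  simp only [cycVec, alternating, Pi.mul_apply, Pi.smul_apply, Units.smul_def, hpar]
  split_ifs <;> first | omega | (push_cast; ring)

lemma mk_cycVec_alternating_mul (hn : Even n) (hn0 : 0 < n) (a b : 𝔽ˣ) (x : Fin n → 𝔽ˣ) :
    mk 𝔽 (cycVec (alternating a b * x)) (cycVec_ne_zero hn0 _) =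
      mk 𝔽 (cycVec x) (cycVec_ne_zero hn0 x) :=
  (mk_eq_mk_iff _ _ _ _ _).mpr ⟨a * b, (cycVec_alternating_mul hn a b x).symm⟩

lemma eq_of_cycVec_eq {x y : Fin n → 𝔽ˣ} (hn : 0 < n) (h0 : x ⟨0, hn⟩ = y ⟨0, hn⟩)
    (h : cycVec x = cycVec y) : x = y := by
  suffices ∀ i (hi : i < n), x ⟨i, hi⟩ = y ⟨i, hi⟩ from funext fun i => this i.1 i.2
  intro i
  induction i with
  | zero => exact fun _ => h0
  | succ i ih =>
    intro hi
    have hedge := congrFun h ⟨i, by omega⟩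
    simp only [cycVec, cSucc_mk hi, ih (by omega)] at hedge
    exact Units.ext (mul_left_cancel₀ (Units.ne_zero _) hedge)

lemma eq_of_smul_cycVec_eq {x y : Fin n → 𝔽ˣ} (hn : 1 < n)
    (hx0 : x ⟨0, by omega⟩ = 1) (hx1 : x ⟨1, hn⟩ = 1)
    (hy0 : y ⟨0, by omega⟩ = 1) (hy1 : y ⟨1, hn⟩ = 1)
    {a : 𝔽ˣ} (h : a • cycVec x = cycVec y) : x = y := by
  have ha : a = 1 := by
    have h0 := congrFun h ⟨0, by omega⟩
    simpa [cycVec, cSucc_mk hn, hx0, hx1, hy0, hy1, Units.smul_def] using h0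
  rw [ha, one_smul] at h
  exact eq_of_cycVec_eq (by omega) (hx0.trans hy0.symm) h

end Torus

def cycXParam (𝔽 : Type*) [Field 𝔽] (k : ℕ) (hk : 0 < k) (u : Fin (2 * k - 2) → 𝔽ˣ) :
    cycX 𝔽 k hk :=
  ⟨mk 𝔽 (cycVec (padOnes u)) (cycVec_ne_zero (by omega) _), padOnes u, rfl⟩

lemma cycXParam_bijective (𝔽 : Type*) [Field 𝔽] (k : ℕ) (hk : 0 < k) :
    Function.Bijective (cycXParam 𝔽 k hk) := by
  have hn : 1 < 2 * k := by omega
  refine ⟨fun u v huv => ?_, ?_⟩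
  · obtain ⟨a, ha⟩ := (mk_eq_mk_iff _ _ _ _ _).mp (congrArg Subtype.val huv)
    exact padOnes_injective (eq_of_smul_cycVec_eq hn (padOnes_zero _ v) (padOnes_one hn v)
      (padOnes_zero _ u) (padOnes_one hn u) ha).symm
  · rintro ⟨_, x, rfl⟩
    set y := alternating (x ⟨0, by omega⟩)⁻¹ (x ⟨1, hn⟩)⁻¹ * x
    have hy0 : y ⟨0, by omega⟩ = 1 := by simp [y, alternating]
    have hy1 : y ⟨1, hn⟩ = 1 := by simp [y, alternating]
    refine ⟨fun i => y ⟨i.1 + 2, by omega⟩, Subtype.ext ?_⟩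
    simp only [cycXParam, padOnes_drop_two hn hy0 hy1]
    exact mk_cycVec_alternating_mul (even_two_mul k) (by omega) _ _ x

theorem stmt8_general {𝔽 : Type*} [Field 𝔽] [Fintype 𝔽] (q k : ℕ)
    (hq : q = Fintype.card 𝔽) (hk : 2 ≤ k) :
    Nat.card ↥(cycX 𝔽 k (Nat.lt_of_lt_of_le Nat.zero_lt_two hk)) = (q - 1) ^ (2*k - 2) := by
  rw [← Nat.card_eq_of_bijective _ (cycXParam_bijective 𝔽 k _), Nat.card_fun, Nat.card_units,
    Nat.card_eq_fintype_card, hq, Nat.card_fin]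

theorem stmt8 {𝔽 : Type*} [Field 𝔽] [Fintype 𝔽] (q k : ℕ)
    (hq : q = Fintype.card 𝔽) (hq2 : 2 < q) (hk : 2 ≤ k) :
    Nat.card ↥(cycX 𝔽 k (Nat.lt_of_lt_of_le Nat.zero_lt_two hk)) = (q - 1) ^ (2*k - 2) :=
  stmt8_general q k hq hk
end

section
/- Let 𝔽 be a finite field with q = |𝔽| > 2 elements and let k ≥ 2 be an integer. If α = (α_1,…,α_{2k}) ∈ 𝔽^{2k} is such that α_1 a_1a_2 + α_2 a_2a_3 + ⋯ + α_{2k-1} a_{2k-1}a_{2k} + α_{2k} a_{2k}a_1 = 0 for every a ∈ (𝔽*)^{2k}, then α = 0. Consequently, the parameterized code C_X(1) over the even cycle C_{2k} has dimension 2k as an 𝔽-vector space. -/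
/-- The parameterized code of order 1 over the even cycle: the set of words obtained by
evaluating `F/t₁` at the points of `X`, for `F` a linear form. -/
def evalCode (𝔽 : Type*) [Field 𝔽] (k : ℕ) (hk : 0 < k) : Set (↥(cycX 𝔽 k hk) → 𝔽) :=
  {w | ∃ α : Fin (2*k) → 𝔽, ∀ P : ↥(cycX 𝔽 k hk),
    w P = (∑ i, α i * Projectivization.rep (P : Projectivization 𝔽 (Fin (2*k) → 𝔽)) i) /
      Projectivization.rep (P : Projectivization 𝔽 (Fin (2*k) → 𝔽)) ⟨0, by omega⟩}


/-!
`cycSum α` is the evaluation of `Σ α_i X_i X_{i+1}`, a polynomial of degree at most `1 < q - 1` in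
each variable; by the combinatorial Nullstellensatz it vanishes on `(𝔽ˣ)ⁿ` only if it is zero, and
for `n ≥ 3` the monomials `X_i X_{i+1}` are pairwise distinct, so `α = 0`. At the point `[cycVec x]`
of `X` the word of `α` takes the value `cycSum α x / (x₁ x₂)` whatever representative is chosen, so
the evaluation map on linear forms is injective and `C_X(1)` has dimension `2k`.
-/

open MvPolynomial

lemma val_cSucc {n : ℕ} (i : Fin n) :
    (cSucc i).val = if i.val + 1 = n then 0 else i.val + 1 := by
  have := i.isLt
  split_ifs with h
  · simp [cSucc, h]
  · exact Nat.mod_eq_of_lt (by omega)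

lemma cSucc_ne_self {n : ℕ} (hn : 2 ≤ n) (i : Fin n) : cSucc i ≠ i := by
  intro h
  have := congrArg Fin.val h
  rw [val_cSucc] at this
  split_ifs at this <;> omega

lemma cSucc_cSucc_ne_self {n : ℕ} (hn : 3 ≤ n) (i : Fin n) : cSucc (cSucc i) ≠ i := by
  intro h
  have := congrArg Fin.val h
  rw [val_cSucc, val_cSucc] at this
  split_ifs at this <;> omega

section

variable {n : ℕ}

noncomputable def cycExp (i : Fin n) : Fin n →₀ ℕ :=
  Finsupp.single i 1 + Finsupp.single (cSucc i) 1

lemma cycExp_apply (i j : Fin n) :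
    cycExp i j = (if i = j then 1 else 0) + (if cSucc i = j then 1 else 0) := by
  simp only [cycExp, Finsupp.add_apply, Finsupp.single_apply]

lemma cycExp_apply_le_one (hn : 2 ≤ n) (i j : Fin n) : cycExp i j ≤ 1 := by
  have := cSucc_ne_self hn i
  rw [cycExp_apply]
  split_ifs <;> simp_all

lemma cycExp_injective (hn : 3 ≤ n) : Function.Injective (cycExp (n := n)) := by
  have hself (i : Fin n) : cycExp i i = 1 := by
    simp [cycExp_apply, cSucc_ne_self (by omega : 2 ≤ n)]
  have hsupp {i j : Fin n} (h : cycExp i j = 1) : i = j ∨ cSucc i = j := by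
    rw [cycExp_apply] at h
    by_contra!
    simp_all
  intro i j h
  by_contra hij
  have hji : cSucc j = i := (hsupp (h ▸ hself i)).resolve_left (Ne.symm hij)
  have hij' : cSucc i = j := (hsupp (h ▸ hself j)).resolve_left hij
  exact cSucc_cSucc_ne_self hn i (hij' ▸ hji)

variable {𝔽 : Type*} [Field 𝔽]

noncomputable def cycPoly (α : Fin n → 𝔽) : MvPolynomial (Fin n) 𝔽 :=
  ∑ i, monomial (cycExp i) (α i)

lemma eval_cycPoly (α : Fin n → 𝔽) (x : Fin n → 𝔽) :
    eval x (cycPoly α) = ∑ i, α i * x i * x (cSucc i) := by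
  have (i : Fin n) : monomial (cycExp i) (α i) = C (α i) * X i * X (cSucc i) := by
    rw [cycExp, X, X, C_mul_monomial, monomial_mul, mul_one, mul_one]
  simp [cycPoly, this]

lemma coeff_cycExp_cycPoly (hn : 3 ≤ n) (α : Fin n → 𝔽) (i : Fin n) :
    coeff (cycExp i) (cycPoly α) = α i := by
  simp [cycPoly, coeff_sum, coeff_monomial, (cycExp_injective hn).eq_iff]

lemma degreeOf_cycPoly_le_one (hn : 2 ≤ n) (α : Fin n → 𝔽) (j : Fin n) :
    degreeOf j (cycPoly α) ≤ 1 := by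
  rw [degreeOf_le_iff]
  intro m hm
  obtain ⟨i, -, hi⟩ := Finset.mem_biUnion.1 (support_sum hm)
  rw [Finset.mem_singleton.1 (support_monomial_subset hi)]
  exact cycExp_apply_le_one hn i j

lemma sum_mul_cycVec (α : Fin n → 𝔽) (x : Fin n → 𝔽ˣ) :
    ∑ i, α i * cycVec x i = cycSum α x := by
  simp only [cycSum, cycVec, mul_assoc]

end

theorem eq_zero_of_forall_cycSum_eq_zero {𝔽 : Type*} [Field 𝔽] [Fintype 𝔽] {n : ℕ} (hn : 3 ≤ n)
    (hq : 2 < Fintype.card 𝔽) {α : Fin n → 𝔽} (h : ∀ a : Fin n → 𝔽ˣ, cycSum α a = 0) :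
    α = 0 := by
  classical
  have hP : cycPoly α = 0 := by
    refine eq_zero_of_eval_zero_at_prod_finset _ (fun _ => Finset.univ.erase 0) (fun j => ?_)
      (fun x hx => ?_)
    · have := degreeOf_cycPoly_le_one (by omega) α j
      rw [Finset.card_erase_of_mem (Finset.mem_univ _), Finset.card_univ]
      omega
    · have hx0 (i : Fin n) : x i ≠ 0 := Finset.ne_of_mem_erase (hx i)
      simpa [eval_cycPoly, cycSum] using h (fun i => Units.mk0 (x i) (hx0 i))
  funext i
  rw [← coeff_cycExp_cycPoly hn α i, hP, coeff_zero, Pi.zero_apply]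

section

variable (𝔽 : Type*) [Field 𝔽] (k : ℕ) (hk : 0 < k)

noncomputable def evalMap : (Fin (2*k) → 𝔽) →ₗ[𝔽] (↥(cycX 𝔽 k hk) → 𝔽) :=
  LinearMap.pi fun P =>
    ((P : Projectivization 𝔽 (Fin (2*k) → 𝔽)).rep ⟨0, by omega⟩)⁻¹ •
      Fintype.linearCombination 𝔽 (P : Projectivization 𝔽 (Fin (2*k) → 𝔽)).rep

lemma evalCode_eq_range : evalCode 𝔽 k hk = LinearMap.range (evalMap 𝔽 k hk) := by
  ext w
  simp [evalCode, evalMap, Fintype.linearCombination_apply, funext_iff, div_eq_inv_mul, eq_comm]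

variable {𝔽 k}

lemma evalMap_apply_mk (α : Fin (2*k) → 𝔽) (x : Fin (2*k) → 𝔽ˣ) :
    evalMap 𝔽 k hk α ⟨_, x, rfl⟩ = cycSum α x / cycVec x ⟨0, by omega⟩ := by
  obtain ⟨a, ha⟩ :=
    Projectivization.exists_smul_eq_mk_rep 𝔽 (cycVec x) (cycVec_ne_zero (by omega) x)
  simp only [evalMap, LinearMap.pi_apply, LinearMap.smul_apply, Fintype.linearCombination_apply,
    ← ha, Pi.smul_apply, Units.smul_def, smul_eq_mul, mul_left_comm (α _) (a : 𝔽),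
    ← Finset.mul_sum, sum_mul_cycVec]
  rw [mul_inv, mul_mul_mul_comm, inv_mul_cancel₀ a.ne_zero, one_mul, div_eq_inv_mul]

lemma evalMap_injective [Fintype 𝔽] (hn : 3 ≤ 2 * k) (hq : 2 < Fintype.card 𝔽) :
    Function.Injective (evalMap 𝔽 k hk) := by
  rw [← LinearMap.ker_eq_bot, LinearMap.ker_eq_bot']
  intro α hα
  refine eq_zero_of_forall_cycSum_eq_zero hn hq fun x => ?_
  have := congrFun hα ⟨_, x, rfl⟩
  rw [evalMap_apply_mk] at this
  exact (div_eq_zero_iff.1 this).resolve_right (mul_ne_zero (x _).ne_zero (x _).ne_zero)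

end

theorem stmt10 {𝔽 : Type*} [Field 𝔽] [Fintype 𝔽] (q k : ℕ)
    (hq : q = Fintype.card 𝔽) (hq2 : 2 < q) (hk : 2 ≤ k) :
    (∀ α : Fin (2*k) → 𝔽, (∀ a : Fin (2*k) → 𝔽ˣ, cycSum α a = 0) → α = 0) ∧
    Module.finrank 𝔽
      ↥(Submodule.span 𝔽 (evalCode 𝔽 k (Nat.lt_of_lt_of_le Nat.zero_lt_two hk))) = 2*k := by
  subst hq
  refine ⟨fun α => eq_zero_of_forall_cycSum_eq_zero (by omega) hq2, ?_⟩
  rw [evalCode_eq_range, Submodule.span_eq,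
    LinearMap.finrank_range_of_inj (evalMap_injective _ (by omega) hq2), Module.finrank_fin_fun]
end

section
/- Let 𝔽 be a finite field with q = |𝔽| elements, q > 2, and let n ≥ 1. Let j ∈ {1,…,n} and let g, h ∈ 𝔽[x_1,…,x_n] be polynomials in which the variable x_j does not occur, and set f = g + h·x_j. Then z(f) = (q/(q-1))·z(g,h) + (q-1)^{n-1} − z(g)/(q-1) − z(h)/(q-1), where z(f_1,…,f_ℓ) denotes the number of points a ∈ (𝔽*)^n at which all f_i vanish. -/
/-!
As `g` and `h` do not involve `x_j`, at a point `a` of the torus `f(a) = g(a) + h(a) a_j` with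
`g(a), h(a)` independent of `a_j`. Replacing `a_j` by every `t ∈ 𝔽ˣ` is a `(q-1)`-to-one
relabelling, so `(q-1) z(f) = ∑_a #{t ∈ 𝔽ˣ | g(a) + h(a) t = 0}`, and this inner count is
`q [g(a) = h(a) = 0] + 1 - [g(a) = 0] - [h(a) = 0]`.
-/

open Finset MvPolynomial Function

theorem MvPolynomial.eval_update_of_notMem_vars {R σ : Type*} [CommSemiring R] [DecidableEq σ]
    {p : MvPolynomial σ R} {j : σ} (hp : j ∉ p.vars) (x : σ → R) (t : R) :
    eval (update x j t) p = eval x p :=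
  eval₂Hom_congr' rfl (fun _ hi _ => update_of_ne (ne_of_mem_of_not_mem hi hp) t x) rfl

theorem Fintype.sum_sum_update {ι α M : Type*} [Fintype ι] [DecidableEq ι] [Fintype α]
    [AddCommMonoid M] (φ : (ι → α) → M) (j : ι) :
    ∑ a, ∑ t, φ (update a j t) = Fintype.card α • ∑ a, φ a := by
  let e : (ι → α) × α ≃ (ι → α) × α :=
    { toFun p := (update p.1 j p.2, p.1 j)
      invFun p := (update p.1 j p.2, p.1 j)
      left_inv p := by simp
      right_inv p := by simp }
  calc ∑ a, ∑ t, φ (update a j t) = ∑ p, φ (e p).1 := by rw [Fintype.sum_prod_type]; rfl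
    _ = ∑ p : (ι → α) × α, φ p.1 := e.sum_comp (fun p => φ p.1)
    _ = Fintype.card α • ∑ a, φ a := by simp [Fintype.sum_prod_type, Finset.smul_sum]

theorem card_filter_units_add_mul_eq_zero {K : Type*} [Field K] [Fintype K] [DecidableEq K]
    (u v : K) :
    #{t : Kˣ | u + v * t = 0} + (if u = 0 then 1 else 0) + (if v = 0 then 1 else 0)
      = Fintype.card K * (if u = 0 ∧ v = 0 then 1 else 0) + 1 := by
  by_cases hv : v = 0
  · by_cases hu : u = 0
    · have := Fintype.card_units (α := K)
      have := Fintype.card_pos (α := K)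
      simp [hu, hv]
      omega
    · simp [hu, hv]
  by_cases hu : u = 0
  · simp [hu, hv]
  · have hroot :
        ({t : Kˣ | u + v * t = 0} : Finset Kˣ) = {Units.mk0 (-u / v) (by simp [hu, hv])} := by
      ext t
      simp only [mem_filter, mem_univ, true_and, mem_singleton, Units.ext_iff, Units.val_mk0,
        eq_div_iff hv]
      constructor <;> intro h <;> linear_combination h
    simp [hroot, hu, hv]

theorem MvPolynomial.card_units_mul_card_torus_zeros_add_mul_X {K σ : Type*} [Field K] [Fintype K]
    [DecidableEq K] [Fintype σ] [DecidableEq σ] {j : σ} {g h : MvPolynomial σ K}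
    (hg : j ∉ g.vars) (hh : j ∉ h.vars) :
    Fintype.card Kˣ * Nat.card {a : σ → Kˣ // eval (fun i => (a i : K)) (g + h * X j) = 0}
        + Nat.card {a : σ → Kˣ // eval (fun i => (a i : K)) g = 0}
        + Nat.card {a : σ → Kˣ // eval (fun i => (a i : K)) h = 0}
      = Fintype.card K * Nat.card {a : σ → Kˣ //
            eval (fun i => (a i : K)) g = 0 ∧ eval (fun i => (a i : K)) h = 0}
        + Fintype.card Kˣ ^ Fintype.card σ := by
  set G := fun a : σ → Kˣ => eval (fun i => (a i : K)) g
  set H := fun a : σ → Kˣ => eval (fun i => (a i : K)) h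
  have hupdate (a : σ → Kˣ) (t : Kˣ) :
      eval (fun i => (update a j t i : K)) (g + h * X j) = G a + H a * t := by
    have hcoe : (fun i => (update a j t i : K)) = update (fun i => (a i : K)) j t :=
      comp_update Units.val a j t
    simp only [hcoe, map_add, map_mul, eval_X, update_self, eval_update_of_notMem_vars hg,
      eval_update_of_notMem_vars hh, G, H]
  simp only [Nat.card_eq_fintype_card, Fintype.card_subtype, card_filter]
  calc _ = ∑ a, (#{t : Kˣ | G a + H a * t = 0} + (if G a = 0 then 1 else 0)
              + (if H a = 0 then 1 else 0)) := by
        rw [← smul_eq_mul, ← Fintype.sum_sum_update _ j]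
        simp only [hupdate, card_filter, sum_add_distrib]
        rfl
    _ = ∑ a, (Fintype.card K * (if G a = 0 ∧ H a = 0 then 1 else 0) + 1) := by
        simp only [card_filter_units_add_mul_eq_zero]
    _ = _ := by
        rw [sum_add_distrib, ← mul_sum, sum_const, card_univ, Fintype.card_fun, smul_eq_mul,
          mul_one]

theorem stmt11_general {𝔽 : Type*} [Field 𝔽] [Fintype 𝔽] (q n : ℕ)
    (hq : q = Fintype.card 𝔽)
    (j : Fin n) (g h : MvPolynomial (Fin n) 𝔽)
    (hg : j ∉ g.vars) (hh : j ∉ h.vars) :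
    (Nat.card {a : Fin n → 𝔽ˣ //
        MvPolynomial.eval (fun i => (a i : 𝔽)) (g + h * MvPolynomial.X j) = 0} : ℚ)
      = ((q : ℚ) / ((q : ℚ) - 1)) *
          Nat.card {a : Fin n → 𝔽ˣ //
            MvPolynomial.eval (fun i => (a i : 𝔽)) g = 0 ∧
            MvPolynomial.eval (fun i => (a i : 𝔽)) h = 0}
        + ((q : ℚ) - 1) ^ (n - 1)
        - (Nat.card {a : Fin n → 𝔽ˣ // MvPolynomial.eval (fun i => (a i : 𝔽)) g = 0} : ℚ) /
            ((q : ℚ) - 1)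
        - (Nat.card {a : Fin n → 𝔽ˣ // MvPolynomial.eval (fun i => (a i : 𝔽)) h = 0} : ℚ) /
            ((q : ℚ) - 1) := by
  classical
  subst hq
  have hcount := congrArg (Nat.cast : ℕ → ℚ) (card_units_mul_card_torus_zeros_add_mul_X hg hh)
  have hunits : (Fintype.card 𝔽ˣ : ℚ) = Fintype.card 𝔽 - 1 := by
    rw [Fintype.card_units, Nat.cast_sub Fintype.card_pos, Nat.cast_one]
  have hq1 : (Fintype.card 𝔽 : ℚ) - 1 ≠ 0 := by
    rw [sub_ne_zero, Nat.cast_ne_one]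
    exact Fintype.one_lt_card.ne'
  obtain ⟨m, rfl⟩ : ∃ m, n = m + 1 := Nat.exists_eq_add_one_of_ne_zero j.pos.ne'
  push_cast [hunits, Fintype.card_fin] at hcount
  rw [Nat.add_sub_cancel]
  field_simp
  linear_combination hcount

theorem stmt11 {𝔽 : Type*} [Field 𝔽] [Fintype 𝔽] (q n : ℕ)
    (hq : q = Fintype.card 𝔽) (hq2 : 2 < q) (hn : 1 ≤ n)
    (j : Fin n) (g h : MvPolynomial (Fin n) 𝔽)
    (hg : j ∉ g.vars) (hh : j ∉ h.vars) :
    (Nat.card {a : Fin n → 𝔽ˣ //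
        MvPolynomial.eval (fun i => (a i : 𝔽)) (g + h * MvPolynomial.X j) = 0} : ℚ)
      = ((q : ℚ) / ((q : ℚ) - 1)) *
          Nat.card {a : Fin n → 𝔽ˣ //
            MvPolynomial.eval (fun i => (a i : 𝔽)) g = 0 ∧
            MvPolynomial.eval (fun i => (a i : 𝔽)) h = 0}
        + ((q : ℚ) - 1) ^ (n - 1)
        - (Nat.card {a : Fin n → 𝔽ˣ // MvPolynomial.eval (fun i => (a i : 𝔽)) g = 0} : ℚ) /
            ((q : ℚ) - 1)
        - (Nat.card {a : Fin n → 𝔽ˣ // MvPolynomial.eval (fun i => (a i : 𝔽)) h = 0} : ℚ) /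
            ((q : ℚ) - 1) :=
  stmt11_general q n hq j g h hg hh
end

section
/- Let 𝔽 be a finite field with q = |𝔽| elements, q > 2, let k ≥ 2, and let 2 ≤ r < 2k. Let h = Σ_{i=1}^{r-1} β_i x_i x_{i+1} ∈ 𝔽[x_1,…,x_{2k}] with β_1,…,β_{r-1} ∈ 𝔽, let β_r ∈ 𝔽 be nonzero, and set g = h + β_r x_r x_{r+1}. Then z(g) = (q-1)^{2k-1} − z(h)/(q-1), where z(f) denotes the number of points a ∈ (𝔽*)^{2k} at which f vanishes. -/
lemma aux12 {𝔽 : Type*} [Field 𝔽] [Fintype 𝔽] {n : ℕ} (H : (Fin n → 𝔽ˣ) → 𝔽)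
    (i j : Fin n) (hij : i ≠ j)
    (hHu : ∀ a u, H (Function.update a j u) = H a)
    (βr : 𝔽) (hβr : βr ≠ 0) :
    Nat.card {a : Fin n → 𝔽ˣ // H a + βr * (a i : 𝔽) * (a j : 𝔽) = 0} * (Fintype.card 𝔽 - 1)
      + Nat.card {a : Fin n → 𝔽ˣ // H a = 0} = (Fintype.card 𝔽 - 1) ^ n := by
  classical
  have hden : ∀ b : Fin n → 𝔽ˣ, βr * ((b i : 𝔽)) ≠ 0 := fun b =>
    mul_ne_zero hβr (Units.ne_zero _)
  have e : {a : Fin n → 𝔽ˣ // H a + βr * (a i : 𝔽) * (a j : 𝔽) = 0} × 𝔽ˣ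
      ≃ {a : Fin n → 𝔽ˣ // H a ≠ 0} :=
  { toFun := fun p => ⟨Function.update p.1.1 j p.2, by
      rw [hHu]
      intro h0
      have := p.1.2
      rw [h0, zero_add] at this
      exact mul_ne_zero (hden _) (Units.ne_zero _) this⟩
    invFun := fun b =>
      (⟨Function.update b.1 j (Units.mk0 (-(H b.1) / (βr * (b.1 i : 𝔽)))
          (div_ne_zero (neg_ne_zero.mpr b.2) (hden b.1))), by
        simp only [hHu, Function.update_of_ne hij, Function.update_self, Units.val_mk0]
        field_simp
        ring⟩, b.1 j)
    left_inv := by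
      rintro ⟨⟨a, ha⟩, u⟩
      have hval : ((a j : 𝔽)) = -(H a) / (βr * (a i : 𝔽)) := by
        rw [eq_div_iff (hden a)]; linear_combination ha
      refine Prod.ext (Subtype.ext ?_) ?_
      · show Function.update (Function.update a j u) j _ = a
        rw [Function.update_idem]
        convert Function.update_eq_self j a using 2
        rw [Units.ext_iff, Units.val_mk0]
        simp only [hHu, Function.update_of_ne hij]
        exact hval.symm
      · exact Function.update_self j u a
    right_inv := by
      rintro ⟨b, hb⟩
      refine Subtype.ext ?_
      show Function.update (Function.update b j _) j (b j) = b
      rw [Function.update_idem, Function.update_eq_self] }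
  have h1 : Nat.card {a : Fin n → 𝔽ˣ // H a + βr * (a i : 𝔽) * (a j : 𝔽) = 0}
      * (Fintype.card 𝔽 - 1) = Nat.card {a : Fin n → 𝔽ˣ // H a ≠ 0} := by
    rw [← Nat.card_congr e, Nat.card_prod, Nat.card_eq_fintype_card (α := 𝔽ˣ),
      Fintype.card_units]
  rw [h1]
  simp only [Nat.card_eq_fintype_card]
  rw [Fintype.card_subtype_compl (p := fun a => H a = 0)]
  have hle : Fintype.card {a : Fin n → 𝔽ˣ // H a = 0} ≤ Fintype.card (Fin n → 𝔽ˣ) :=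
    Fintype.card_subtype_le _
  rw [Nat.sub_add_cancel hle]
  simp [Fintype.card_fun, Fintype.card_units]

theorem stmt12 {𝔽 : Type*} [Field 𝔽] [Fintype 𝔽] (q k r : ℕ)
    (hq : q = Fintype.card 𝔽) (hq2 : 2 < q) (hk : 2 ≤ k) (hr2 : 2 ≤ r) (hr : r < 2*k)
    (β : Fin (r - 1) → 𝔽) (βr : 𝔽) (hβr : βr ≠ 0) :
    (Nat.card {a : Fin (2*k) → 𝔽ˣ //
        (∑ i : Fin (r - 1), β i * (a ⟨i.1, by have := i.isLt; omega⟩ : 𝔽) *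
            (a ⟨i.1 + 1, by have := i.isLt; omega⟩ : 𝔽)) +
          βr * (a ⟨r - 1, by omega⟩ : 𝔽) * (a ⟨r, by omega⟩ : 𝔽) = 0} : ℚ)
      = ((q : ℚ) - 1) ^ (2*k - 1)
        - (Nat.card {a : Fin (2*k) → 𝔽ˣ //
            ∑ i : Fin (r - 1), β i * (a ⟨i.1, by have := i.isLt; omega⟩ : 𝔽) *
              (a ⟨i.1 + 1, by have := i.isLt; omega⟩ : 𝔽) = 0} : ℚ) / ((q : ℚ) - 1) := by
  classical
  have hc : ((q:ℚ) - 1) ≠ 0 := by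
    have : (2:ℚ) < q := by exact_mod_cast hq2
    linarith
  have hpow : ((q:ℚ) - 1) ^ (2*k - 1) * ((q:ℚ) - 1) = ((q:ℚ) - 1) ^ (2*k) := by
    rw [← pow_succ]
    congr 1
    omega
  have hcast : ((q - 1 : ℕ) : ℚ) = (q:ℚ) - 1 := by
    rw [Nat.cast_sub (by omega)]; simp
  have key : Nat.card {a : Fin (2*k) → 𝔽ˣ //
        (∑ i : Fin (r - 1), β i * (a ⟨i.1, by have := i.isLt; omega⟩ : 𝔽) *
            (a ⟨i.1 + 1, by have := i.isLt; omega⟩ : 𝔽)) +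
          βr * (a ⟨r - 1, by omega⟩ : 𝔽) * (a ⟨r, by omega⟩ : 𝔽) = 0} * (q - 1)
      + Nat.card {a : Fin (2*k) → 𝔽ˣ //
            ∑ i : Fin (r - 1), β i * (a ⟨i.1, by have := i.isLt; omega⟩ : 𝔽) *
              (a ⟨i.1 + 1, by have := i.isLt; omega⟩ : 𝔽) = 0} = (q - 1) ^ (2*k) := by
    subst hq
    refine aux12 _ ⟨r - 1, by omega⟩ ⟨r, by omega⟩ ?_ ?_ βr hβr
    · exact Fin.ne_of_val_ne (by simp; omega)
    · intro a u
      have hupd : ∀ (m : ℕ) (hm : m < 2*k), m ≠ r →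
          Function.update a ⟨r, by omega⟩ u ⟨m, hm⟩ = a ⟨m, hm⟩ := by
        intro m hm hne
        exact Function.update_of_ne (fun h => hne (congrArg Fin.val h)) _ _
      refine Finset.sum_congr rfl fun i _ => ?_
      have hi := i.isLt
      rw [hupd i.1 (by omega) (by omega), hupd (i.1 + 1) (by omega) (by omega)]
  have h := congrArg (fun m : ℕ => (m : ℚ)) key
  simp only [Nat.cast_add, Nat.cast_mul, Nat.cast_pow] at h
  rw [hcast] at h
  simp only [Nat.card_eq_fintype_card] at h ⊢
  field_simp
  linear_combination h - hpow
end

section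
/- Let q ≥ 3 and k ≥ 2 be integers. Then (q-1)^{2k-2} > q^k(q-2) if and only if k ≥ 5, or (k = 4 and q ≥ 4). -/
/-!
Since `(q - 1) ^ 2 = q (q - 2) + 1 ≥ q` for `q ≥ 3`, raising `k` by one multiplies the left side
by `(q - 1) ^ 2` and the right side only by `q`, so once the inequality holds it keeps holding.
It therefore suffices to check the inequality at `k = 5` (all `q`) and at `k = 4` (`q ≥ 4`), and
its failure at `k = 3` (all `q`) and at `k = 4, q = 3`; failure at `k = 2` then follows.
-/

section
variable {R : Type*} [CommRing R] [LinearOrder R] [IsStrictOrderedRing R]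

theorem pow_mul_sub_two_lt_sub_one_pow_succ {q : R} (hq : 3 ≤ q) {k : ℕ} (hk : 1 ≤ k)
    (h : q ^ k * (q - 2) < (q - 1) ^ (2 * k - 2)) :
    q ^ (k + 1) * (q - 2) < (q - 1) ^ (2 * (k + 1) - 2) := by
  have hq_le : q ≤ (q - 1) ^ 2 := by nlinarith
  calc q ^ (k + 1) * (q - 2) = q ^ k * (q - 2) * q := by ring
    _ < (q - 1) ^ (2 * k - 2) * (q - 1) ^ 2 :=
      mul_lt_mul h hq_le (by linarith) (pow_nonneg (by linarith) _)
    _ = (q - 1) ^ (2 * (k + 1) - 2) := by rw [← pow_add]; congr 1; omega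

theorem pow_four_mul_sub_two_lt_sub_one_pow_six {q : R} (hq : 4 ≤ q) :
    q ^ 4 * (q - 2) < (q - 1) ^ 6 := by
  nlinarith [pow_pos (by linarith : (0 : R) < q) 2, sq_nonneg (q * (q - 4))]

theorem pow_five_mul_sub_two_lt_sub_one_pow_eight {q : R} (hq : 3 ≤ q) :
    q ^ 5 * (q - 2) < (q - 1) ^ 8 := by
  nlinarith [sq_nonneg (q * (q - 3)), sq_nonneg ((q - 1) ^ 2 * (q - 3)),
    pow_pos (by linarith : (0 : R) < q - 1) 4, pow_pos (by linarith : (0 : R) < q) 3]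

theorem pow_mul_sub_two_lt_sub_one_pow_of_five_le {q : R} (hq : 3 ≤ q) {k : ℕ} (hk : 5 ≤ k) :
    q ^ k * (q - 2) < (q - 1) ^ (2 * k - 2) := by
  induction k, hk using Nat.le_induction with
  | base => exact pow_five_mul_sub_two_lt_sub_one_pow_eight hq
  | succ k hk ih => exact pow_mul_sub_two_lt_sub_one_pow_succ hq (by omega) ih

theorem sub_one_pow_four_le_pow_three_mul_sub_two {q : R} (hq : 3 ≤ q) :
    (q - 1) ^ 4 ≤ q ^ 3 * (q - 2) := by
  have h : 1 ≤ q * (q - 1) * (q - 2) :=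
    one_le_mul_of_one_le_of_one_le (one_le_mul_of_one_le_of_one_le (by linarith) (by linarith))
      (by linarith)
  linear_combination 2 * h

theorem sub_one_pow_le_pow_mul_sub_two_of_le_three {q : R} (hq : 3 ≤ q) {k : ℕ} (hk₂ : 2 ≤ k)
    (hk₃ : k ≤ 3) : (q - 1) ^ (2 * k - 2) ≤ q ^ k * (q - 2) := by
  have h₃ := sub_one_pow_four_le_pow_three_mul_sub_two hq
  obtain rfl | rfl : k = 2 ∨ k = 3 := by omega
  · exact le_of_not_gt fun h₂ ↦ (pow_mul_sub_two_lt_sub_one_pow_succ hq (by norm_num) h₂).not_ge h₃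
  · exact h₃

end

theorem stmt13 (q k : ℕ) (hq : 3 ≤ q) (hk : 2 ≤ k) :
    ((q : ℤ) - 1) ^ (2*k - 2) > (q : ℤ) ^ k * ((q : ℤ) - 2) ↔
      5 ≤ k ∨ (k = 4 ∧ 4 ≤ q) := by
  have hq' : (3 : ℤ) ≤ q := by exact_mod_cast hq
  constructor
  · intro h
    by_contra! hc
    obtain ⟨hk₅, hk₄⟩ := hc
    obtain hk₃ | rfl : k ≤ 3 ∨ k = 4 := by omega
    · exact (sub_one_pow_le_pow_mul_sub_two_of_le_three hq' hk hk₃).not_gt h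
    · obtain rfl : q = 3 := by have := hk₄ rfl; omega
      norm_num at h
  · rintro (hk₅ | ⟨rfl, hq₄⟩)
    · exact pow_mul_sub_two_lt_sub_one_pow_of_five_le hq' hk₅
    · exact pow_four_mul_sub_two_lt_sub_one_pow_six (by exact_mod_cast hq₄)
end

section
/- Let 𝔽 be a finite field with q = |𝔽| > 2 elements. Let X ⊆ ℙ^3(𝔽) be the projective toric subset parameterized by the 4-cycle C_4, and let C = C_X(1) ⊆ 𝔽^m, m = (q-1)^2, be the parameterized evaluation code of order 1. Then the minimum distance of C equals (q-2)^2. -/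
/-- Hamming weight of a word. -/
noncomputable def wt {𝔽 : Type*} [Field 𝔽] {ι : Type*} (w : ι → 𝔽) : ℕ := Nat.card {i : ι // w i ≠ 0}

/-!
Sending `(a, b) ∈ (𝔽ˣ)²` to the point `(1 : a : ab : b)` identifies `X` with the torus `(𝔽ˣ)²`,
so `|X| = (q - 1)²`, and turns the codeword of `∑ αᵢ tᵢ` into the function
`(a, b) ↦ α₀ + α₁ a + α₂ ab + α₃ b = (α₀ + α₃ b) + (α₁ + α₂ b) a`.
For fixed `b` this is affine in `a`, so it has at most one zero in `𝔽ˣ` unless both coefficients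
vanish, and for `α ≠ 0` that happens for at most one `b`. Hence at least `q - 2` rows carry at
least `q - 2` nonzero values each. The form `(a - 1)(b - 1)` attains the bound.
-/

namespace C4Code

open Finset Projectivization
open scoped LinearAlgebra.Projectivization

lemma mul_le_card_filter_prod {α β : Type*} [Fintype α] [Fintype β] (P : α → β → Prop)
    [∀ a b, Decidable (P a b)] (rows : Finset β) {m n : ℕ} (hm : m ≤ #rows)
    (hn : ∀ b ∈ rows, n ≤ #{a | P a b}) :
    m * n ≤ #{p : α × β | P p.1 p.2} := by
  have hfiber : #{p : α × β | P p.1 p.2} = ∑ b, #{a | P a b} := by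
    simp only [card_filter]
    rw [Fintype.sum_prod_type, sum_comm]
  calc m * n ≤ #rows * n := Nat.mul_le_mul_right _ hm
    _ = ∑ _b ∈ rows, n := by rw [sum_const, smul_eq_mul]
    _ ≤ ∑ b ∈ rows, #{a | P a b} := sum_le_sum hn
    _ ≤ ∑ b, #{a | P a b} := sum_le_sum_of_subset (subset_univ _)
    _ = _ := hfiber.symm

variable {𝔽 : Type*} [Field 𝔽]

def toricForm (α : Fin 4 → 𝔽) (a b : 𝔽) : 𝔽 := α 0 + α 1 * a + α 2 * (a * b) + α 3 * b

section Counting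

variable [Fintype 𝔽] [DecidableEq 𝔽]

lemma card_filter_add_mul_eq_zero_le_one {c d : 𝔽} (h : c ≠ 0 ∨ d ≠ 0) :
    #{a : 𝔽ˣ | d + c * a = 0} ≤ 1 := by
  refine card_le_one.mpr fun a ha a' ha' => ?_
  simp only [mem_filter, mem_univ, true_and] at ha ha'
  have hc : c ≠ 0 := by
    rintro rfl
    simp_all
  exact Units.ext (mul_left_cancel₀ hc (by linear_combination ha - ha'))

lemma card_sub_two_le_card_filter_add_mul_ne_zero {c d : 𝔽} (h : c ≠ 0 ∨ d ≠ 0) :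
    Fintype.card 𝔽 - 2 ≤ #{a : 𝔽ˣ | d + c * a ≠ 0} := by
  have hsplit := card_filter_add_card_filter_not (s := univ) (fun a : 𝔽ˣ => d + c * a = 0)
  rw [card_univ, Fintype.card_units] at hsplit
  have := card_filter_add_mul_eq_zero_le_one h
  simp only [ne_eq]
  omega

lemma sq_card_sub_two_le_card_toricForm_ne_zero {α : Fin 4 → 𝔽} (hα : α ≠ 0) :
    (Fintype.card 𝔽 - 2) ^ 2 ≤ #{p : 𝔽ˣ × 𝔽ˣ | toricForm α p.1 p.2 ≠ 0} := by
  have hrow (a b : 𝔽) : toricForm α a b = (α 0 + α 3 * b) + (α 1 + α 2 * b) * a := by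
    simp only [toricForm]
    ring
  have hbad : #{b : 𝔽ˣ | α 1 + α 2 * b = 0 ∧ α 0 + α 3 * b = 0} ≤ 1 := by
    by_cases h21 : α 2 ≠ 0 ∨ α 1 ≠ 0
    · exact (card_le_card (monotone_filter_right _ fun _ _ h => h.1)).trans
        (card_filter_add_mul_eq_zero_le_one h21)
    · have h30 : α 3 ≠ 0 ∨ α 0 ≠ 0 := by
        contrapose! hα
        ext i
        fin_cases i <;> simp_all
      exact (card_le_card (monotone_filter_right _ fun _ _ h => h.2)).trans
        (card_filter_add_mul_eq_zero_le_one h30)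
  have hrows : Fintype.card 𝔽 - 2 ≤
      #{b : 𝔽ˣ | ¬(α 1 + α 2 * b = 0 ∧ α 0 + α 3 * b = 0)} := by
    have hsplit := card_filter_add_card_filter_not (s := univ)
      (fun b : 𝔽ˣ => α 1 + α 2 * b = 0 ∧ α 0 + α 3 * b = 0)
    rw [card_univ, Fintype.card_units] at hsplit
    omega
  rw [sq]
  refine mul_le_card_filter_prod (fun a b : 𝔽ˣ => toricForm α a b ≠ 0) _ hrows fun b hb => ?_
  simp only [mem_filter, mem_univ, true_and, not_and_or] at hb
  simp only [hrow]
  exact card_sub_two_le_card_filter_add_mul_ne_zero hb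

lemma card_toricForm_ne_zero_eq_sq :
    #{p : 𝔽ˣ × 𝔽ˣ | toricForm ![1, -1, 1, -1] (p.1 : 𝔽) p.2 ≠ 0} = (Fintype.card 𝔽 - 2) ^ 2 := by
  have hfactor (a b : 𝔽) : toricForm ![1, -1, 1, -1] a b = (a - 1) * (b - 1) := by
    simp only [toricForm, Matrix.cons_val]
    ring
  have hfilter : ({p : 𝔽ˣ × 𝔽ˣ | toricForm ![1, -1, 1, -1] (p.1 : 𝔽) p.2 ≠ 0} : Finset _) =
      ({1}ᶜ : Finset 𝔽ˣ) ×ˢ ({1}ᶜ : Finset 𝔽ˣ) := by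
    ext p
    simp [hfactor, sub_eq_zero, not_or]
  rw [hfilter, card_product, card_compl, Fintype.card_units, card_singleton, Nat.sub_sub, sq]

end Counting

lemma sum_mul_rep_mk_div {ι : Type*} [Fintype ι] (α v : ι → 𝔽) (hv : v ≠ 0) (j : ι) :
    (∑ i, α i * (mk 𝔽 v hv).rep i) / (mk 𝔽 v hv).rep j = (∑ i, α i * v i) / v j := by
  obtain ⟨c, hc⟩ := exists_smul_eq_mk_rep 𝔽 v hv
  simp only [← hc, Pi.smul_apply, Units.smul_def, smul_eq_mul, mul_left_comm _ (c : 𝔽),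
    ← mul_sum]
  exact mul_div_mul_left _ _ c.ne_zero

def torusLift (a b : 𝔽ˣ) : Fin (2 * 2) → 𝔽ˣ := ![1, 1, a, b]

lemma cycVec_torusLift (a b : 𝔽ˣ) : cycVec (torusLift a b) = ![1, (a : 𝔽), a * b, b] := by
  ext i
  fin_cases i <;> simp [cycVec, cSucc, torusLift]

noncomputable def torusPoint (p : 𝔽ˣ × 𝔽ˣ) : cycX 𝔽 2 Nat.zero_lt_two :=
  ⟨mk 𝔽 (cycVec (torusLift p.1 p.2)) (cycVec_ne_zero (by norm_num) _), _, rfl⟩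

lemma torusPoint_injective : Function.Injective (torusPoint (𝔽 := 𝔽)) := by
  rintro ⟨a, b⟩ ⟨a', b'⟩ h
  obtain ⟨c, hc⟩ := (mk_eq_mk_iff 𝔽 _ _ _ _).mp (congrArg Subtype.val h)
  rw [cycVec_torusLift, cycVec_torusLift] at hc
  have hc1 : (c : 𝔽) = 1 := by simpa [Units.smul_def] using congrFun hc 0
  have ha : (a' : 𝔽) = a := by simpa [Units.smul_def, hc1] using congrFun hc 1
  have hb : (b' : 𝔽) = b := by simpa [Units.smul_def, hc1] using congrFun hc 3
  rw [Units.ext ha, Units.ext hb]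

lemma torusPoint_surjective : Function.Surjective (torusPoint (𝔽 := 𝔽)) := by
  rintro ⟨_, x, rfl⟩
  refine ⟨(x 2 / x 0, x 3 / x 1), Subtype.ext ((mk_eq_mk_iff 𝔽 _ _ _ _).mpr ⟨(x 0 * x 1)⁻¹, ?_⟩)⟩
  rw [cycVec_torusLift]
  ext i
  fin_cases i <;> simp [cycVec, cSucc, Units.smul_def] <;> field_simp

noncomputable def torusEquiv : 𝔽ˣ × 𝔽ˣ ≃ cycX 𝔽 2 Nat.zero_lt_two :=
  .ofBijective torusPoint ⟨torusPoint_injective, torusPoint_surjective⟩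

noncomputable def codeword (α : Fin (2 * 2) → 𝔽) : cycX 𝔽 2 Nat.zero_lt_two → 𝔽 := fun P =>
  (∑ i, α i * (P : ℙ 𝔽 (Fin (2 * 2) → 𝔽)).rep i) / (P : ℙ 𝔽 (Fin (2 * 2) → 𝔽)).rep 0

lemma codeword_torusPoint (α : Fin (2 * 2) → 𝔽) (p : 𝔽ˣ × 𝔽ˣ) :
    codeword α (torusPoint p) = toricForm α p.1 p.2 := by
  simp only [codeword, torusPoint]
  rw [sum_mul_rep_mk_div, cycVec_torusLift, Fin.sum_univ_four]
  simp [toricForm]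

lemma wt_codeword [Fintype 𝔽] [DecidableEq 𝔽] (α : Fin (2 * 2) → 𝔽) :
    wt (codeword α) = #{p : 𝔽ˣ × 𝔽ˣ | toricForm α p.1 p.2 ≠ 0} := by
  have e : {p : 𝔽ˣ × 𝔽ˣ // toricForm α p.1 p.2 ≠ 0} ≃ {P // codeword α P ≠ 0} :=
    torusEquiv.subtypeEquiv fun p => by rw [← codeword_torusPoint]; rfl
  rw [wt, ← Nat.card_congr e, Nat.card_eq_fintype_card, Fintype.card_subtype]

end C4Code

open C4Code in
theorem stmt15 {𝔽 : Type*} [Field 𝔽] [Fintype 𝔽] (q : ℕ)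
    (hq : q = Fintype.card 𝔽) (hq2 : 2 < q) :
    Nat.card ↥(cycX 𝔽 2 Nat.zero_lt_two) = (q - 1) ^ 2 ∧
    IsLeast {d : ℕ | ∃ w ∈ evalCode 𝔽 2 Nat.zero_lt_two, w ≠ 0 ∧ wt w = d} ((q - 2) ^ 2) := by
  classical
  subst hq
  refine ⟨?_, ?_, ?_⟩
  · rw [← Nat.card_congr torusEquiv, Nat.card_prod, Nat.card_units, Nat.card_eq_fintype_card, sq]
  · have hwt : wt (codeword (𝔽 := 𝔽) ![1, -1, 1, -1]) = (Fintype.card 𝔽 - 2) ^ 2 := by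
      rw [wt_codeword, card_toricForm_ne_zero_eq_sq]
    refine ⟨codeword ![1, -1, 1, -1], ⟨_, fun _ => rfl⟩, fun h0 => ?_, hwt⟩
    simp only [wt, h0, Pi.zero_apply, ne_eq, not_true_eq_false, Nat.card_of_isEmpty] at hwt
    exact pow_ne_zero 2 (Nat.sub_ne_zero_of_lt hq2) hwt.symm
  · rintro d ⟨w, ⟨α, hw⟩, hw0, rfl⟩
    obtain rfl : w = codeword α := funext hw
    rw [wt_codeword]
    refine sq_card_sub_two_le_card_toricForm_ne_zero fun hα => hw0 ?_
    ext P
    simp [codeword, hα]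
end
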